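/- (Theorem 4.5: correctness of the GPK algorithm for the Generalised Bernstein–Vazirani problem.) Let R be an m×n matrix over 𝔽₂, let r₀ ∈ 𝔽₂ᵐ, and let f : 𝔽₂ⁿ → 𝔽₂ᵐ be the affine function f(x) = r₀ ⊕ (R·x), where (R·x)ᵢ = rᵢ·x and rᵢ ∈ 𝔽₂ⁿ is the i-th row of R. Then for every i ∈ Fin m and every z ∈ 𝔽₂ⁿ, Σ_{x ∈ 𝔽₂ⁿ} (−1)^( (f(x)·e_i) ⊕ (x·z) ) equals (−1)^((r₀)ᵢ)·2ⁿ if z = rᵢ and 0 otherwise. Hence the GPK algorithm with marker e_i outputs the i-th row of R with certainty, so the m runs GPK(e_0), …, GPK(e_{m−1}) exactly determine R. -/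

import Mathlib

/-- The sign `(−1)^a ∈ ℂ` associated to a bit `a ∈ 𝔽₂`. -/
noncomputable def sgn (a : ZMod 2) : ℂ := (-1 : ℂ) ^ a.val

/-- The pairing `x·z = Σᵢ xᵢ·zᵢ ∈ 𝔽₂` of two binary strings. -/
def dotp {k : ℕ} (x z : Fin k → ZMod 2) : ZMod 2 := ∑ i, x i * z i

/-- The `i`-th standard basis vector of `𝔽₂ᵏ`. -/
def stdBasis {k : ℕ} (i : Fin k) : Fin k → ZMod 2 :=
  fun j => if j = i then 1 else 0

/-!
Because `f` is affine, the phase `(−1)^(f(x)·eᵢ ⊕ x·z)` splits as `(−1)^((r₀)ᵢ) · (−1)^(x·(rᵢ ⊕ z))`.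
For fixed `w`, `x ↦ (−1)^(x·w)` is an additive character of `𝔽₂ⁿ`, trivial exactly when `w = 0`
(test it on the basis vectors), so by orthogonality of characters its sum over `𝔽₂ⁿ` is `2ⁿ` or `0`
according as `rᵢ ⊕ z = 0`, i.e. `z = rᵢ`, or not.
-/

lemma sgn_add (a b : ZMod 2) : sgn (a + b) = sgn a * sgn b := by
  rw [sgn, sgn, sgn, ZMod.val_add, ← neg_one_pow_eq_pow_mod_two, pow_add]

@[simp]
lemma sgn_zero : sgn 0 = 1 := pow_zero _

lemma sgn_eq_one_iff {a : ZMod 2} : sgn a = 1 ↔ a = 0 := by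
  obtain rfl | rfl : a = 0 ∨ a = 1 := by revert a; decide
  · simp
  · norm_num [sgn, ZMod.val_one]

lemma neg_eq_self_of_zmod_two {ι : Type*} (x : ι → ZMod 2) : -x = x :=
  funext fun j => ZMod.neg_eq_self_mod_two (x j)

section Pairing

variable {k : ℕ}

lemma dotp_eq_dotProduct (x z : Fin k → ZMod 2) : dotp x z = x ⬝ᵥ z := rfl

lemma stdBasis_eq_single (i : Fin k) : stdBasis i = Pi.single i 1 := by
  ext j
  simp [stdBasis, Pi.single_apply]

lemma dotp_stdBasis (y : Fin k → ZMod 2) (i : Fin k) : dotp y (stdBasis i) = y i := by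
  rw [dotp_eq_dotProduct, stdBasis_eq_single, dotProduct_single_one]

lemma stdBasis_dotp (i : Fin k) (y : Fin k → ZMod 2) : dotp (stdBasis i) y = y i := by
  rw [dotp_eq_dotProduct, stdBasis_eq_single, single_one_dotProduct]

lemma dotp_add_right (x w v : Fin k → ZMod 2) : dotp x (w + v) = dotp x w + dotp x v :=
  dotProduct_add x w v

lemma dotp_affine_stdBasis {m : ℕ} (r₀ : Fin m → ZMod 2) (R : Matrix (Fin m) (Fin k) (ZMod 2))
    (x : Fin k → ZMod 2) (i : Fin m) :
    dotp (r₀ + R.mulVec x) (stdBasis i) = r₀ i + dotp x (R i) := by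
  rw [dotp_stdBasis, Pi.add_apply, Matrix.mulVec, dotp_eq_dotProduct, dotProduct_comm]

noncomputable def dotpChar (w : Fin k → ZMod 2) : AddChar (Fin k → ZMod 2) ℂ where
  toFun x := sgn (dotp x w)
  map_zero_eq_one' := by simp [dotp_eq_dotProduct]
  map_add_eq_mul' x y := by simp only [dotp_eq_dotProduct, add_dotProduct, sgn_add]

lemma dotpChar_apply (w x : Fin k → ZMod 2) : dotpChar w x = sgn (dotp x w) := rfl

lemma dotpChar_eq_zero_iff {w : Fin k → ZMod 2} : dotpChar w = 0 ↔ w = 0 := by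
  refine ⟨fun h => funext fun j => ?_, fun hw => ?_⟩
  · simpa [dotpChar_apply, stdBasis_dotp, sgn_eq_one_iff] using
      DFunLike.congr_fun h (stdBasis j)
  · ext x
    simp [dotpChar_apply, hw, dotp_eq_dotProduct]

lemma sum_sgn_dotp (w : Fin k → ZMod 2) :
    ∑ x : Fin k → ZMod 2, sgn (dotp x w) = if w = 0 then 2 ^ k else 0 := by
  classical
  simpa [dotpChar_apply, dotpChar_eq_zero_iff] using (dotpChar w).sum_eq_ite

end Pairing

/-- Theorem 4.5 (Generalised Bernstein–Vazirani): if `f(x) = r₀ ⊕ R·x` is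
affine, then for every `i` and `z`, `Σ_x (−1)^((f(x)·e_i) ⊕ (x·z))` equals
`(−1)^((r₀)ᵢ)·2ⁿ` if `z` is the `i`-th row of `R` and `0` otherwise, so the
GPK algorithm with marker `e_i` outputs the `i`-th row of `R` with certainty
and the `m` runs exactly determine `R`. -/
theorem generalised_bernstein_vazirani {n m : ℕ}
    (R : Matrix (Fin m) (Fin n) (ZMod 2)) (r₀ : Fin m → ZMod 2)
    (f : (Fin n → ZMod 2) → (Fin m → ZMod 2))
    (hf : ∀ x, f x = r₀ + R.mulVec x)
    (i : Fin m) (z : Fin n → ZMod 2) :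
    (∑ x : Fin n → ZMod 2, sgn (dotp (f x) (stdBasis i) + dotp x z)) =
      (if z = R i then sgn (r₀ i) * 2 ^ n else 0) := by
  have phase (x : Fin n → ZMod 2) :
      sgn (dotp (f x) (stdBasis i) + dotp x z) = sgn (r₀ i) * sgn (dotp x (R i + z)) := by
    rw [hf, dotp_affine_stdBasis, add_assoc, sgn_add, dotp_add_right]
  have rows_eq : R i + z = 0 ↔ z = R i := by
    rw [add_eq_zero_iff_eq_neg, eq_comm, neg_eq_self_of_zmod_two]
  simp_rw [phase, ← Finset.mul_sum, sum_sgn_dotp, rows_eq, mul_ite, mul_zero]
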